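/- arXiv:2001.03825 — 3 statements merged into one kernel-verified Lean document; each statement's English description precedes it below -/
import Mathlib

section
/- For even k ≥ 0, if a polynomial w of degree at most k on [-1,1] satisfies ∫_{-1}^{1} w dx = 0 and, for all polynomials v of degree at most k, -∫_{-1}^{1} w v' dx + (w(-1)+w(1))/2 · (v(1)-v(-1)) = 0, then w is identically zero. -/
/-!
Testing with `v = X` and using `∫ w = 0` gives `w(-1) + w(1) = 0`, after which the condition
says exactly that `w` is `L²(-1, 1)`-orthogonal to all polynomials of degree `< k`. Since `k` is
even, `w(x) - w(-x)` has degree `< k` and is orthogonal to itself, so `w` is even; hence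
`w(±1) = 0` and `w = (X² - 1) r` with `deg r < k`, and then `∫ (1 - x²) r² = -∫ w r = 0`
forces `r = 0`.
-/

open Polynomial Set

namespace Polynomial

theorem exists_derivative_eq_of_degree_lt {K : Type*} [Field K] [CharZero K] {q : K[X]} {n : ℕ}
    (hq : q.degree < n) : ∃ v : K[X], v.degree ≤ n ∧ derivative v = q := by
  rcases eq_or_ne q 0 with rfl | hq0
  · exact ⟨0, by simp, derivative_zero⟩
  refine ⟨∑ i ∈ Finset.range n, C (q.coeff i / (i + 1)) * X ^ (i + 1), ?_, ?_⟩
  · refine (degree_sum_le _ _).trans (Finset.sup_le fun i hi => ?_)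
    refine (degree_C_mul_X_pow_le _ _).trans ?_
    exact_mod_cast Finset.mem_range.mp hi
  · conv_rhs => rw [q.as_sum_range_C_mul_X_pow' ((natDegree_lt_iff_degree_lt hq0).mpr hq)]
    refine (map_sum _ _ _).trans (Finset.sum_congr rfl fun i _ => ?_)
    rw [derivative_C_mul_X_pow, Nat.add_sub_cancel]
    push_cast
    rw [div_mul_cancel₀ _ (Nat.cast_add_one_ne_zero i)]

theorem eq_zero_of_integral_eq_zero_of_nonneg {p : ℝ[X]} {a b : ℝ} (hab : a < b)
    (hp : ∀ x ∈ Icc a b, 0 ≤ p.eval x) (h : ∫ x in a..b, p.eval x = 0) : p = 0 := by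
  by_contra hp0
  obtain ⟨c, hc, hpc⟩ := (Icc_infinite hab).exists_notMem_finite (p.finite_setOfPred_isRoot hp0)
  exact (intervalIntegral.integral_pos hab p.continuous.continuousOn
    (fun x hx => hp x (Ioc_subset_Icc_self hx)) ⟨c, hc, (hp c hc).lt_of_ne' hpc⟩).ne' h

theorem eq_zero_of_integral_mul_self_eq_zero {p : ℝ[X]} {a b : ℝ} (hab : a < b)
    (h : ∫ x in a..b, p.eval x * p.eval x = 0) : p = 0 :=
  mul_self_eq_zero.mp <| eq_zero_of_integral_eq_zero_of_nonneg hab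
    (fun x _ => by simpa only [eval_mul] using mul_self_nonneg (p.eval x))
    (by simpa only [eval_mul] using h)

theorem degree_sub_comp_neg_X_lt {R : Type*} [Ring R] {p : R[X]} {k : ℕ} (hk : Even k)
    (hp : p.degree ≤ k) : (p - p.comp (-X)).degree < k := by
  rcases hp.lt_or_eq with hlt | heq
  · exact (degree_sub_le _ _).trans_lt (max_lt hlt (degree_comp_neg_X.trans_lt hlt))
  · have hp0 : p ≠ 0 := by rintro rfl; simp at heq
    refine heq ▸ degree_sub_lt_left degree_comp_neg_X.symm hp0 ?_
    rw [comp_neg_X_leadingCoeff_eq, natDegree_eq_of_degree_eq_some heq, hk.neg_one_pow, one_mul]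

theorem integral_eval_comp_neg_X_mul (p q : ℝ[X]) (a : ℝ) :
    ∫ x in -a..a, (p.comp (-X)).eval x * q.eval x
      = ∫ x in -a..a, p.eval x * (q.comp (-X)).eval x := by
  simpa using intervalIntegral.integral_comp_neg
    (a := -a) (b := a) fun x => p.eval x * (q.comp (-X)).eval x

section OrthogonalToDegreeLT

variable {k : ℕ} {w : ℝ[X]}

theorem comp_neg_X_eq_self_of_orthogonal (hk : Even k) (hw : w.degree ≤ k)
    (horth : ∀ q : ℝ[X], q.degree < k → ∫ x in (-1 : ℝ)..1, w.eval x * q.eval x = 0) :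
    w.comp (-X) = w := by
  set d := w - w.comp (-X)
  have hd : d.degree < k := degree_sub_comp_neg_X_lt hk hw
  have hdd : ∫ x in (-1 : ℝ)..1, d.eval x * d.eval x = 0 :=
    calc ∫ x in (-1 : ℝ)..1, d.eval x * d.eval x
        = (∫ x in (-1 : ℝ)..1, w.eval x * d.eval x)
            - ∫ x in (-1 : ℝ)..1, (w.comp (-X)).eval x * d.eval x := by
          rw [← intervalIntegral.integral_sub (Continuous.intervalIntegrable (by fun_prop) _ _)
            (Continuous.intervalIntegrable (by fun_prop) _ _)]
          simp only [d, eval_sub, sub_mul]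
      _ = (∫ x in (-1 : ℝ)..1, w.eval x * d.eval x)
            - ∫ x in (-1 : ℝ)..1, w.eval x * (d.comp (-X)).eval x := by
          rw [integral_eval_comp_neg_X_mul]
      _ = 0 := by
          rw [horth d hd, horth _ (degree_comp_neg_X.trans_lt hd), sub_zero]
  exact (sub_eq_zero.mp (eq_zero_of_integral_mul_self_eq_zero (by norm_num) hdd)).symm

theorem eq_zero_of_orthogonal_of_eval_neg_one_of_eval_one (hw : w.degree ≤ k)
    (horth : ∀ q : ℝ[X], q.degree < k → ∫ x in (-1 : ℝ)..1, w.eval x * q.eval x = 0)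
    (hm1 : w.eval (-1) = 0) (h1 : w.eval 1 = 0) : w = 0 := by
  have hdvd : (X - C 1) * (X - C (-1)) ∣ w :=
    (isCoprime_X_sub_C_of_isUnit_sub (by norm_num)).mul_dvd (dvd_iff_isRoot.mpr h1)
      (dvd_iff_isRoot.mpr hm1)
  obtain ⟨r, rfl⟩ := hdvd
  rcases eq_or_ne r 0 with rfl | hr0
  · exact mul_zero _
  have hr : r.degree < k := by
    have h2 : ((X - C (1 : ℝ)) * (X - C (-1))).degree = 2 := by
      rw [degree_mul, degree_X_sub_C, degree_X_sub_C]; rfl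
    rw [degree_mul, h2, degree_eq_natDegree hr0] at hw
    rw [degree_eq_natDegree hr0]
    have hle : 2 + r.natDegree ≤ k := by exact_mod_cast hw
    exact_mod_cast (show r.natDegree < k by omega)
  have hwr : -((X - C 1) * (X - C (-1)) * r * r) = 0 := by
    refine eq_zero_of_integral_eq_zero_of_nonneg (by norm_num : (-1 : ℝ) < 1) (fun x hx => ?_) ?_
    · have hev : (-((X - C 1) * (X - C (-1)) * r * r)).eval x
          = (1 - x) * (1 + x) * r.eval x ^ 2 := by
        simp only [eval_neg, eval_mul, eval_sub, eval_X, eval_C]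
        ring
      rw [hev]
      exact mul_nonneg (mul_nonneg (by linarith [hx.2]) (by linarith [hx.1])) (sq_nonneg _)
    · simpa only [eval_neg, eval_mul, intervalIntegral.integral_neg, neg_eq_zero] using horth r hr
  simpa [hr0] using hwr

end OrthogonalToDegreeLT

end Polynomial

theorem stmt0 (k : ℕ) (hk : Even k) (w : Polynomial ℝ) (hw : w.degree ≤ (k : ℕ))
    (havg : (∫ x in (-1:ℝ)..1, w.eval x) = 0)
    (hbil : ∀ v : Polynomial ℝ, v.degree ≤ (k : ℕ) →
      -(∫ x in (-1:ℝ)..1, w.eval x * (Polynomial.derivative v).eval x)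
        + (w.eval (-1) + w.eval 1) / 2 * (v.eval 1 - v.eval (-1)) = 0) :
    w = 0 := by
  obtain rfl | hkpos := Nat.eq_zero_or_pos k
  · rw [eq_C_of_degree_le_zero hw] at havg ⊢
    simpa using havg
  have hsum : w.eval (-1) + w.eval 1 = 0 := by
    have hX := hbil X (degree_X_le.trans (by exact_mod_cast hkpos))
    simp only [derivative_X, eval_one, mul_one, eval_X, havg] at hX
    linarith
  have horth : ∀ q : ℝ[X], q.degree < k → ∫ x in (-1 : ℝ)..1, w.eval x * q.eval x = 0 := by
    intro q hq
    obtain ⟨v, hv, rfl⟩ := exists_derivative_eq_of_degree_lt hq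
    simpa [hsum] using hbil v hv
  have hsymm : w.eval (-1) = w.eval 1 := by
    conv_lhs => rw [← comp_neg_X_eq_self_of_orthogonal hk hw horth]
    simp
  exact eq_zero_of_orthogonal_of_eval_neg_one_of_eval_one hw horth (by linarith) (by linarith)
end

section
/- For even k ≥ 0 on the square [-1,1]², if a tensor-product polynomial u of degree at most k in each variable satisfies: (a) ∫∫ u·v dxdy = 0 for all tensor-product polynomials v of degree at most k-1 in each variable; (b) ∫_{-1}^1 (u(x,1)+u(x,-1))/2 · φ(x) dx = 0 for all polynomials φ of degree ≤ k-1; (c) ∫_{-1}^1 (u(1,y)+u(-1,y))/2 · φ(y) dy = 0 for all polynomials φ of degree ≤ k-1; and (d) u(1,1)+u(1,-1)+u(-1,1)+u(-1,-1) = 0; then u is identically zero. -/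
/-!
One variable first: if `p` has degree `≤ k` with `k` even, is orthogonal on `[-1, 1]` to all
polynomials of degree `< k`, and `p(1) + p(-1) = 0`, then `p = 0` (in Legendre terms,
`p = α L_k` and `L_k(±1) = 1`). Since `k` is even, `q(x) = p(x) - p(-x)` has degree `< k`;
orthogonality of `p` to `q`, combined with the reflection `x ↦ -x`, gives `∫ q² = 0`, so `p` is
even and therefore vanishes at `±1`. Then `p = (x² - 1) r` with `deg r < k`, and
`∫ (1 - x²) r² = -∫ p r = 0` forces `r = 0`.

The two-dimensional statement follows by applying this three times: to `y ↦ ∫ u(x, y) xⁱ dx`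
(conditions (a) and (b), after Fubini), to `y ↦ u(1, y) + u(-1, y)` (conditions (c) and (d)),
and finally, for each `y`, to `x ↦ u(x, y)`, whose moments and boundary sum are the two
functions just shown to vanish.
-/

open MeasureTheory Polynomial Finset Set

lemma integral_sum_mul_pow_mul_pow (s : Finset ℕ) (g : ℕ → ℝ) (a b : ℝ) (i : ℕ) :
    ∫ x in a..b, (∑ m ∈ s, g m * x ^ m) * x ^ i =
      ∑ m ∈ s, g m * ∫ x in a..b, x ^ (m + i) := by
  simp_rw [Finset.sum_mul, mul_assoc, ← pow_add]
  rw [intervalIntegral.integral_finsetSum fun m _ =>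
    ((continuous_pow _).const_mul _).intervalIntegrable _ _]
  simp_rw [intervalIntegral.integral_const_mul]

namespace Polynomial

lemma integral_eval_mul_eval_eq_zero_of_degree_lt {p q : ℝ[X]} {a b : ℝ} {k : ℕ}
    (horth : ∀ i < k, ∫ x in a..b, p.eval x * x ^ i = 0) (hq : q.degree < k) :
    ∫ x in a..b, p.eval x * q.eval x = 0 := by
  rcases eq_or_ne q 0 with rfl | hq0
  · simp
  simp_rw [eval_eq_sum_range' ((natDegree_lt_iff_degree_lt hq0).2 hq), Finset.mul_sum,
    mul_left_comm (p.eval _)]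
  rw [intervalIntegral.integral_finsetSum fun i _ =>
    (by fun_prop : Continuous fun x => q.coeff i * (p.eval x * x ^ i)).intervalIntegrable _ _]
  refine Finset.sum_eq_zero fun i hi => ?_
  rw [intervalIntegral.integral_const_mul, horth i (Finset.mem_range.1 hi), mul_zero]

lemma eq_zero_of_integral_mul_eval_sq_eq_zero {w : ℝ → ℝ} {a b : ℝ} (hab : a < b)
    (hw : IntervalIntegrable w volume a b) (hpos : ∀ x ∈ Ioo a b, 0 < w x) {q : ℝ[X]}
    (h : ∫ x in a..b, w x * q.eval x ^ 2 = 0) : q = 0 := by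
  by_contra hq
  have hint : IntervalIntegrable (fun x => w x * q.eval x ^ 2) volume a b :=
    hw.mul_continuousOn (q.continuous.pow 2).continuousOn
  have hnonneg : 0 ≤ᵐ[volume.restrict (uIoc a b)] fun x => w x * q.eval x ^ 2 := by
    rw [uIoc_of_le hab.le]
    refine ae_restrict_of_ae_eq_of_ae_restrict Ioo_ae_eq_Ioc ?_
    exact (ae_restrict_iff' measurableSet_Ioo).2 <|
      ae_of_all _ fun x hx => mul_nonneg (hpos x hx).le (sq_nonneg _)
  have hsupp : Ioo a b \ {x | q.IsRoot x} ⊆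
      Function.support (fun x => w x * q.eval x ^ 2) ∩ Ioc a b :=
    fun x ⟨hx, hroot⟩ =>
      ⟨mul_ne_zero (hpos x hx).ne' (pow_ne_zero 2 hroot), Ioo_subset_Ioc_self hx⟩
  have hpos_int : 0 < ∫ x in a..b, w x * q.eval x ^ 2 := by
    rw [intervalIntegral.integral_pos_iff_support_of_nonneg_ae' hnonneg hint]
    refine ⟨hab, ?_⟩
    calc 0 < volume (Ioo a b) := by simpa using hab
      _ = volume (Ioo a b \ {x | q.IsRoot x}) :=
        (measure_sdiff_null ((finite_setOfPred_isRoot hq).measure_zero volume)).symm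
      _ ≤ _ := measure_mono hsupp
  exact hpos_int.ne' h

lemma comp_neg_X_eq_self_of_moments {p : ℝ[X]} {k : ℕ} (hk : Even k) (hp : p.natDegree ≤ k)
    (horth : ∀ i < k, ∫ x in (-1:ℝ)..1, p.eval x * x ^ i = 0) : p.comp (-X) = p := by
  set q := p - p.comp (-X) with hq
  have hq_eval : ∀ x, q.eval x = p.eval x - p.eval (-x) := by simp [hq]
  have hq_deg : q.degree < k := by
    rw [degree_lt_iff_coeff_zero]
    intro m hm
    rw [coeff_sub, ← neg_one_mul, ← C_1, ← C_neg, comp_C_mul_X_coeff]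
    rcases hm.eq_or_lt with rfl | hlt
    · rw [hk.neg_one_pow, mul_one, sub_self]
    · rw [coeff_eq_zero_of_natDegree_lt (hp.trans_lt hlt), zero_mul, sub_zero]
  have hpq := integral_eval_mul_eval_eq_zero_of_degree_lt horth hq_deg
  have hreflect : ∫ x in (-1:ℝ)..1, p.eval (-x) * q.eval x = 0 := by
    calc ∫ x in (-1:ℝ)..1, p.eval (-x) * q.eval x
        = -∫ x in (-1:ℝ)..1, p.eval (-x) * q.eval (-x) := by
          rw [← intervalIntegral.integral_neg]
          congr 1 with x
          rw [hq_eval, hq_eval, neg_neg]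
          ring
      _ = -∫ x in (-1:ℝ)..1, p.eval x * q.eval x := by
          rw [intervalIntegral.integral_comp_neg fun x => p.eval x * q.eval x]
          norm_num
      _ = 0 := by rw [hpq, neg_zero]
  have hsq : ∫ x in (-1:ℝ)..1, 1 * q.eval x ^ 2 = 0 := by
    calc ∫ x in (-1:ℝ)..1, 1 * q.eval x ^ 2
        = ∫ x in (-1:ℝ)..1, p.eval x * q.eval x - p.eval (-x) * q.eval x := by
          congr 1 with x
          rw [hq_eval]
          ring
      _ = 0 := by
          rw [intervalIntegral.integral_sub ((by fun_prop : Continuous _).intervalIntegrable _ _)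
            ((by fun_prop : Continuous _).intervalIntegrable _ _), hpq, hreflect, sub_zero]
  exact (sub_eq_zero.1 (eq_zero_of_integral_mul_eval_sq_eq_zero (by norm_num)
    intervalIntegrable_const (fun _ _ => one_pos) hsq)).symm

lemma eq_zero_of_moments_of_eval_one_of_eval_neg_one {p : ℝ[X]} {k : ℕ} (hp : p.natDegree ≤ k)
    (horth : ∀ i < k, ∫ x in (-1:ℝ)..1, p.eval x * x ^ i = 0)
    (h1 : p.eval 1 = 0) (h2 : p.eval (-1) = 0) : p = 0 := by
  obtain ⟨r, rfl⟩ : X ^ 2 - C 1 ∣ p := by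
    have hfac : (X ^ 2 - C 1 : ℝ[X]) = (X - C 1) * (X - C (-1)) := by
      simp only [map_neg, map_one]; ring
    rw [hfac]
    exact (isCoprime_X_sub_C_of_isUnit_sub (by norm_num)).mul_dvd
      (dvd_iff_isRoot.2 h1) (dvd_iff_isRoot.2 h2)
  have hr_deg : r.degree < k := by
    rcases eq_or_ne r 0 with rfl | hr0
    · simp
    rw [natDegree_mul (X_pow_sub_C_ne_zero two_pos 1) hr0, natDegree_X_pow_sub_C] at hp
    exact degree_le_natDegree.trans_lt (by exact_mod_cast (by omega : r.natDegree < k))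
  have hweighted : ∫ x in (-1:ℝ)..1, (1 - x ^ 2) * r.eval x ^ 2 = 0 := by
    calc ∫ x in (-1:ℝ)..1, (1 - x ^ 2) * r.eval x ^ 2
        = -∫ x in (-1:ℝ)..1, ((X ^ 2 - C 1) * r).eval x * r.eval x := by
          rw [← intervalIntegral.integral_neg]
          congr 1 with x
          simp only [eval_mul, eval_sub, eval_pow, eval_X, eval_C]
          ring
      _ = 0 := by rw [integral_eval_mul_eval_eq_zero_of_degree_lt horth hr_deg, neg_zero]
  rw [eq_zero_of_integral_mul_eval_sq_eq_zero (by norm_num)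
    ((by fun_prop : Continuous fun x : ℝ => 1 - x ^ 2).intervalIntegrable _ _)
    (fun x hx => by nlinarith [hx.1, hx.2]) hweighted, mul_zero]

theorem eq_zero_of_moments_of_eval_one_add_eval_neg_one {p : ℝ[X]} {k : ℕ} (hk : Even k)
    (hp : p.natDegree ≤ k) (horth : ∀ i < k, ∫ x in (-1:ℝ)..1, p.eval x * x ^ i = 0)
    (hend : p.eval 1 + p.eval (-1) = 0) : p = 0 := by
  have hsymm : p.eval (-1) = p.eval 1 := by
    simpa using congr_arg (eval 1) (comp_neg_X_eq_self_of_moments hk hp horth)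
  exact eq_zero_of_moments_of_eval_one_of_eval_neg_one hp horth (by linarith) (by linarith)

end Polynomial

theorem eq_zero_of_moments_of_apply_one_add_apply_neg_one {k : ℕ} (hk : Even k) {f : ℝ → ℝ}
    (a : ℕ → ℝ) (hf : ∀ x, f x = ∑ n ∈ range (k + 1), a n * x ^ n)
    (horth : ∀ i < k, ∫ x in (-1:ℝ)..1, f x * x ^ i = 0) (hend : f 1 + f (-1) = 0) (x : ℝ) :
    f x = 0 := by
  set p : ℝ[X] := ∑ n ∈ range (k + 1), C (a n) * X ^ n
  have hp_eval : ∀ x, p.eval x = f x := by simp [p, eval_finsetSum, hf]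
  have hp_deg : p.natDegree ≤ k :=
    natDegree_sum_le_of_forall_le _ _ fun n hn => (natDegree_C_mul_X_pow_le _ _).trans
      (Nat.lt_succ_iff.1 (Finset.mem_range.1 hn))
  simp_rw [← hp_eval] at horth hend ⊢
  rw [eq_zero_of_moments_of_eval_one_add_eval_neg_one hk hp_deg horth hend, eval_zero]

lemma intervalIntegral_intervalIntegral_swap_of_continuous {F : ℝ → ℝ → ℝ}
    (hF : Continuous (Function.uncurry F)) (a b c d : ℝ) :
    ∫ x in a..b, ∫ y in c..d, F x y = ∫ y in c..d, ∫ x in a..b, F x y :=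
  intervalIntegral_intervalIntegral_swap <|
    (hF.continuousOn.integrableOn_compact (isCompact_uIcc.prod isCompact_uIcc)).mono_set
      (prod_mono uIoc_subset_uIcc uIoc_subset_uIcc)

section TensorProduct

variable {k : ℕ} {c : ℕ → ℕ → ℝ} {u : ℝ → ℝ → ℝ}

lemma eq_sum_sum_mul_pow_mul_pow
    (hu : ∀ x y : ℝ, u x y =
      ∑ i ∈ range (k + 1), ∑ j ∈ range (k + 1), c i j * x ^ i * y ^ j) (x y : ℝ) :
    u x y = ∑ m ∈ range (k + 1), (∑ n ∈ range (k + 1), c m n * y ^ n) * x ^ m := by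
  simp only [hu, Finset.sum_mul]
  exact Finset.sum_congr rfl fun m _ => Finset.sum_congr rfl fun n _ => by ring

lemma integral_mul_pow_eq_zero_of_moments_of_edges (hk : Even k)
    (hu : ∀ x y : ℝ, u x y =
      ∑ i ∈ range (k + 1), ∑ j ∈ range (k + 1), c i j * x ^ i * y ^ j) {i : ℕ}
    (hmom : ∀ j < k, ∫ x in (-1:ℝ)..1, ∫ y in (-1:ℝ)..1, u x y * x ^ i * y ^ j = 0)
    (hedge : ∫ x in (-1:ℝ)..1, (u x 1 + u x (-1)) / 2 * x ^ i = 0) (y : ℝ) :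
    ∫ x in (-1:ℝ)..1, u x y * x ^ i = 0 := by
  have hu_cont : Continuous (Function.uncurry u) := by
    rw [show u = _ from funext fun x => funext (hu x)]
    fun_prop
  refine eq_zero_of_moments_of_apply_one_add_apply_neg_one hk
    (f := fun y => ∫ x in (-1:ℝ)..1, u x y * x ^ i)
    (fun n => ∑ m ∈ range (k + 1), c m n * ∫ x in (-1:ℝ)..1, x ^ (m + i)) (fun y => ?_)
    (fun j hj => ?_) ?_ y
  · simp_rw [eq_sum_sum_mul_pow_mul_pow hu _ y]
    rw [integral_sum_mul_pow_mul_pow]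
    simp only [Finset.sum_mul]
    rw [Finset.sum_comm]
    exact Finset.sum_congr rfl fun n _ => Finset.sum_congr rfl fun m _ => by ring
  · simp_rw [← intervalIntegral.integral_mul_const]
    rw [← intervalIntegral_intervalIntegral_swap_of_continuous (by fun_prop)]
    exact hmom j hj
  · calc (∫ x in (-1:ℝ)..1, u x 1 * x ^ i) + ∫ x in (-1:ℝ)..1, u x (-1) * x ^ i
        = 2 * ∫ x in (-1:ℝ)..1, (u x 1 + u x (-1)) / 2 * x ^ i := by
          rw [← intervalIntegral.integral_const_mul, ← intervalIntegral.integral_add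
            ((by fun_prop : Continuous _).intervalIntegrable _ _)
            ((by fun_prop : Continuous _).intervalIntegrable _ _)]
          congr 1 with x
          ring
      _ = 0 := by rw [hedge, mul_zero]

lemma add_eq_zero_of_edge_moments_of_corners (hk : Even k)
    (hu : ∀ x y : ℝ, u x y =
      ∑ i ∈ range (k + 1), ∑ j ∈ range (k + 1), c i j * x ^ i * y ^ j)
    (hedge : ∀ j < k, ∫ y in (-1:ℝ)..1, (u 1 y + u (-1) y) / 2 * y ^ j = 0)
    (hcorner : u 1 1 + u 1 (-1) + u (-1) 1 + u (-1) (-1) = 0) (y : ℝ) :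
    u 1 y + u (-1) y = 0 := by
  refine eq_zero_of_moments_of_apply_one_add_apply_neg_one hk (f := fun y => u 1 y + u (-1) y)
    (fun n => ∑ m ∈ range (k + 1), c m n * (1 + (-1) ^ m)) (fun y => ?_) (fun j hj => ?_)
    (by linarith) y
  · simp only [hu, ← Finset.sum_add_distrib, Finset.sum_mul]
    rw [Finset.sum_comm]
    exact Finset.sum_congr rfl fun n _ => Finset.sum_congr rfl fun m _ => by ring
  · calc ∫ y in (-1:ℝ)..1, (u 1 y + u (-1) y) * y ^ j
        = 2 * ∫ y in (-1:ℝ)..1, (u 1 y + u (-1) y) / 2 * y ^ j := by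
          rw [← intervalIntegral.integral_const_mul]
          congr 1 with y
          ring
      _ = 0 := by rw [hedge j hj, mul_zero]

end TensorProduct

theorem stmt6 (k : ℕ) (hk : Even k) (c : ℕ → ℕ → ℝ) (u : ℝ → ℝ → ℝ)
    (hu : ∀ x y : ℝ, u x y =
      ∑ i ∈ Finset.range (k+1), ∑ j ∈ Finset.range (k+1), c i j * x ^ i * y ^ j)
    (hmom : ∀ i j : ℕ, i < k → j < k →
      (∫ x in (-1:ℝ)..1, ∫ y in (-1:ℝ)..1, u x y * x ^ i * y ^ j) = 0)
    (hedgex : ∀ i : ℕ, i < k →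
      (∫ x in (-1:ℝ)..1, (u x 1 + u x (-1)) / 2 * x ^ i) = 0)
    (hedgey : ∀ j : ℕ, j < k →
      (∫ y in (-1:ℝ)..1, (u 1 y + u (-1) y) / 2 * y ^ j) = 0)
    (hcorner : u 1 1 + u 1 (-1) + u (-1) 1 + u (-1) (-1) = 0) :
    ∀ x y : ℝ, u x y = 0 := by
  intro x y
  exact eq_zero_of_moments_of_apply_one_add_apply_neg_one hk _
    (eq_sum_sum_mul_pow_mul_pow hu · y)
    (fun i hi => integral_mul_pow_eq_zero_of_moments_of_edges hk hu (hmom i · hi) (hedgex i hi) y)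
    (add_eq_zero_of_edge_moments_of_corners hk hu hedgey hcorner y) x
end

section
/- Boundedness of the projection P_h^*: for even k, there exists C(k) such that for every continuous function w on [-1,1], the unique polynomial P of degree ≤ k with ∫_{-1}^1 P v dx = ∫_{-1}^1 w v dx for all v of degree ≤ k-1 and (P(1)+P(-1))/2 = (w(1)+w(-1))/2 satisfies ‖P‖_{L^∞([-1,1])} ≤ C(k) ‖w‖_{L^∞([-1,1])}. -/
/-!
For even `k`, the conditions defining `P_h^⋆ w` determine a polynomial of degree `≤ k`
uniquely. If `P ⟂ ℙ_{k-1}` in `L²(-1, 1)` and `P(1) + P(-1) = 0`, then `P(x) - P(-x)` has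
degree `< k` (the `x^k` terms cancel as `k` is even) and is orthogonal to itself, so `P` is
even, vanishes at `±1`, and `P = (x² - 1) R` with `R ∈ ℙ_{k-1}`; then `∫ (x² - 1) R² = 0`
forces `R = 0`. So the linear data map (moments against `x^j`, `j < k`, and boundary mean) is
injective on the coefficient space `ℝ^{k+1}` and has a bounded inverse, while the data of `w`
are bounded by `2 ‖w‖_∞`.
-/

/-- `P` is the special local projection `P_h^⋆` of `u` on the cell `[a,b]`. -/
def IsProjStar (k : ℕ) (a b : ℝ) (u : ℝ → ℝ) (P : Polynomial ℝ) : Prop :=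
  P.degree ≤ (k : ℕ) ∧
  (∀ v : Polynomial ℝ, v.degree < (k : WithBot ℕ) →
    (∫ x in a..b, P.eval x * v.eval x) = ∫ x in a..b, u x * v.eval x) ∧
  (P.eval b + P.eval a) / 2 = (u b + u a) / 2

open Polynomial Set

namespace Polynomial

section NegX

variable {R : Type*} [CommRing R] {k : ℕ} {p : R[X]}

theorem coeff_comp_neg_X (p : R[X]) (n : ℕ) : (p.comp (-X)).coeff n = p.coeff n * (-1) ^ n := by
  rw [show (-X : R[X]) = C (-1) * X by simp, comp_C_mul_X_coeff]

theorem comp_neg_X_mem_degreeLT (hp : p ∈ degreeLT R k) : p.comp (-X) ∈ degreeLT R k := by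
  rw [mem_degreeLT, degree_lt_iff_coeff_zero] at hp ⊢
  intro n hn
  rw [coeff_comp_neg_X, hp n hn, zero_mul]

theorem sub_comp_neg_X_mem_degreeLT (hk : Even k) (hp : p.degree ≤ k) :
    p - p.comp (-X) ∈ degreeLT R k := by
  rw [mem_degreeLT, degree_lt_iff_coeff_zero]
  intro n hn
  rw [coeff_sub, coeff_comp_neg_X]
  rcases hn.eq_or_lt with rfl | hlt
  · rw [hk.neg_one_pow, mul_one, sub_self]
  · rw [coeff_eq_zero_of_degree_lt (hp.trans_lt (by exact_mod_cast hlt)), zero_mul, sub_zero]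

end NegX

theorem intervalIntegral_eval_pos {a b : ℝ} (hab : a < b) {q : ℝ[X]} (hq : q ≠ 0)
    (hnonneg : ∀ x ∈ Icc a b, 0 ≤ q.eval x) : 0 < ∫ x in a..b, q.eval x := by
  obtain ⟨c, hc, hroot⟩ := (Icc_infinite hab).exists_notMem_finset q.roots.toFinset
  have hqc : 0 < q.eval c := (hnonneg c hc).lt_of_ne' (by simpa [hq] using hroot)
  simpa using intervalIntegral.integral_lt_integral_of_continuousOn_of_le_of_exists_lt hab
    continuousOn_const q.continuous.continuousOn
    (fun x hx => hnonneg x (Ioc_subset_Icc_self hx)) ⟨c, hc, hqc⟩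

theorem intervalIntegrable_eval_mul_eval (p q : ℝ[X]) (a b : ℝ) :
    IntervalIntegrable (fun x => p.eval x * q.eval x) MeasureTheory.volume a b :=
  (p.continuous.mul q.continuous).intervalIntegrable a b

end Polynomial

noncomputable def l2Pairing (a b : ℝ) : ℝ[X] →ₗ[ℝ] ℝ[X] →ₗ[ℝ] ℝ :=
  LinearMap.mk₂ ℝ (fun p q => ∫ x in a..b, p.eval x * q.eval x)
    (fun p₁ p₂ q => by
      simp only [eval_add, add_mul]
      exact intervalIntegral.integral_add (intervalIntegrable_eval_mul_eval _ _ _ _)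
        (intervalIntegrable_eval_mul_eval _ _ _ _))
    (fun c p q => by
      simp only [eval_smul, smul_eq_mul, mul_assoc, intervalIntegral.integral_const_mul])
    (fun p q₁ q₂ => by
      simp only [eval_add, mul_add]
      exact intervalIntegral.integral_add (intervalIntegrable_eval_mul_eval _ _ _ _)
        (intervalIntegrable_eval_mul_eval _ _ _ _))
    (fun c p q => by
      simp only [eval_smul, smul_eq_mul, mul_left_comm _ c, intervalIntegral.integral_const_mul])

namespace l2Pairing

variable {a b : ℝ}

@[simp]
theorem apply (p q : ℝ[X]) : l2Pairing a b p q = ∫ x in a..b, p.eval x * q.eval x := rfl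

theorem self_pos (hab : a < b) {p : ℝ[X]} (hp : p ≠ 0) : 0 < l2Pairing a b p p := by
  simpa using intervalIntegral_eval_pos hab (mul_ne_zero hp hp)
    (fun x _ => by simpa using mul_self_nonneg (p.eval x))

theorem comp_neg_X (p q : ℝ[X]) :
    l2Pairing (-a) a (p.comp (-X)) q = l2Pairing (-a) a p (q.comp (-X)) := by
  simpa using intervalIntegral.integral_comp_neg (a := -a) (b := a)
    fun x => p.eval x * q.eval (-x)

end l2Pairing

theorem comp_neg_X_eq_self_of_orthogonal {k : ℕ} (hk : Even k) {P : ℝ[X]}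
    (hdeg : P.degree ≤ k) (horth : ∀ v ∈ degreeLT ℝ k, l2Pairing (-1) 1 P v = 0) :
    P.comp (-X) = P := by
  have hD := sub_comp_neg_X_mem_degreeLT hk hdeg
  by_contra hne
  have hpos := l2Pairing.self_pos (a := -1) (b := 1) (by norm_num) (sub_ne_zero.mpr (Ne.symm hne))
  rw [LinearMap.map_sub₂, horth _ hD, l2Pairing.comp_neg_X,
    horth _ (comp_neg_X_mem_degreeLT hD), sub_self] at hpos
  exact hpos.false

theorem eq_zero_of_orthogonal_of_eval_one_add_eval_neg_one {k : ℕ} (hk : Even k) {P : ℝ[X]}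
    (hdeg : P.degree ≤ k) (horth : ∀ v ∈ degreeLT ℝ k, l2Pairing (-1) 1 P v = 0)
    (hbd : P.eval 1 + P.eval (-1) = 0) : P = 0 := by
  have hsymm : P.eval (-1) = P.eval 1 := by
    simpa using congr_arg (eval 1) (comp_neg_X_eq_self_of_orthogonal hk hdeg horth)
  obtain ⟨Q, rfl⟩ := dvd_iff_isRoot.mpr (show P.IsRoot 1 by simp only [IsRoot]; linarith)
  have hQ : Q.IsRoot (-1) := by
    have h : eval (-1) ((X - C 1) * Q) = 0 := by linarith
    norm_num at h
    exact h
  obtain ⟨R, rfl⟩ := dvd_iff_isRoot.mpr hQ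
  by_contra hP
  have hR : R ≠ 0 := by rintro rfl; simp at hP
  have hRdeg : R ∈ degreeLT ℝ k := by
    have := natDegree_le_of_degree_le hdeg
    rw [natDegree_mul (X_sub_C_ne_zero _) (mul_ne_zero (X_sub_C_ne_zero _) hR),
      natDegree_mul (X_sub_C_ne_zero _) hR, natDegree_X_sub_C, natDegree_X_sub_C] at this
    exact mem_degreeLT.mpr (degree_le_natDegree.trans_lt (by exact_mod_cast (by omega)))
  -- `(X - 1)(X + 1) R · R ≤ 0` on `[-1, 1]`, so orthogonality to `R` forces it to vanish
  have hpos := intervalIntegral_eval_pos (a := -1) (b := 1) (by norm_num)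
    (neg_ne_zero.mpr (mul_ne_zero hP hR)) fun x ⟨hx₁, hx₂⟩ => by
      have : eval x (-((X - C 1) * ((X - C (-1)) * R) * R)) =
          (1 - x) * (1 + x) * R.eval x ^ 2 := by
        simp only [eval_neg, eval_mul, eval_sub, eval_X, eval_C]; ring
      rw [this]
      exact mul_nonneg (mul_nonneg (by linarith) (by linarith)) (sq_nonneg _)
  have horthR := horth R hRdeg
  simp only [l2Pairing.apply, eval_mul] at horthR
  simp only [eval_neg, eval_mul, intervalIntegral.integral_neg] at hpos
  linarith

/-- The data fixing `P_h^⋆ w` on `[-1, 1]`: the moments against `1, x, …, x^(k-1)` and the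
boundary mean. -/
noncomputable def projStarData (k : ℕ) : ℝ[X] →ₗ[ℝ] (Fin k → ℝ) × ℝ :=
  (LinearMap.pi fun j : Fin k => (l2Pairing (-1) 1).flip (X ^ (j : ℕ))).prod
    ((2⁻¹ : ℝ) • (leval 1 + leval (-1)))

theorem projStarData_apply (k : ℕ) (P : ℝ[X]) :
    projStarData k P =
      (fun j : Fin k => ∫ x in (-1 : ℝ)..1, P.eval x * x ^ (j : ℕ),
        (P.eval 1 + P.eval (-1)) / 2) := by
  refine Prod.ext (funext fun j => ?_) ?_ <;> simp [projStarData]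
  ring

theorem eq_zero_of_projStarData_eq_zero {k : ℕ} (hk : Even k) {P : ℝ[X]}
    (hP : P ∈ degreeLT ℝ (k + 1)) (h : projStarData k P = 0) : P = 0 := by
  classical
  rw [projStarData_apply, Prod.mk_eq_zero] at h
  have horth : degreeLT ℝ k ≤ LinearMap.ker (l2Pairing (-1) 1 P) := by
    rw [degreeLT_eq_span_X_pow, Submodule.span_le, Finset.coe_image, Finset.coe_range,
      Set.image_subset_iff]
    intro j hj
    simpa using congr_fun h.1 ⟨j, by simpa using hj⟩
  rw [degreeLT_succ_eq_degreeLE, mem_degreeLE] at hP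
  exact eq_zero_of_orthogonal_of_eval_one_add_eval_neg_one hk hP (fun v hv => horth hv)
    (by linarith [h.2])

theorem exists_norm_degreeLTEquiv_le_projStarData {k : ℕ} (hk : Even k) : ∃ K ≥ (0 : ℝ),
    ∀ P (hP : P ∈ degreeLT ℝ (k + 1)),
      ‖degreeLTEquiv ℝ (k + 1) ⟨P, hP⟩‖ ≤ K * ‖projStarData k P‖ := by
  set T := projStarData k ∘ₗ (degreeLT ℝ (k + 1)).subtype ∘ₗ
    (degreeLTEquiv ℝ (k + 1)).symm.toLinearMap
  have hT : LinearMap.ker T = ⊥ := by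
    refine LinearMap.ker_eq_bot'.mpr fun c hc => ?_
    have := eq_zero_of_projStarData_eq_zero hk ((degreeLTEquiv ℝ (k + 1)).symm c).2 hc
    simpa using congr_arg (degreeLTEquiv ℝ (k + 1)) (Submodule.coe_eq_zero.mp this)
  obtain ⟨K, -, hK⟩ := T.exists_antilipschitzWith hT
  refine ⟨K, K.2, fun P hP => ?_⟩
  simpa [T] using ZeroHomClass.bound_of_antilipschitz T hK (degreeLTEquiv ℝ (k + 1) ⟨P, hP⟩)

theorem norm_eval_le_of_mem_degreeLT {𝕜 : Type*} [NormedField 𝕜] {n : ℕ} {p : 𝕜[X]}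
    (hp : p ∈ degreeLT 𝕜 n) {x : 𝕜} (hx : ‖x‖ ≤ 1) :
    ‖p.eval x‖ ≤ n * ‖degreeLTEquiv 𝕜 n ⟨p, hp⟩‖ := by
  set c := degreeLTEquiv 𝕜 n ⟨p, hp⟩
  calc ‖p.eval x‖ = ‖∑ i, c i * x ^ (i : ℕ)‖ := by rw [eval_eq_sum_degreeLTEquiv hp]
    _ ≤ ∑ _i : Fin n, ‖c‖ := by
      refine (norm_sum_le _ _).trans (Finset.sum_le_sum fun i _ => ?_)
      rw [norm_mul, norm_pow]
      exact (mul_le_of_le_one_right (norm_nonneg _) (pow_le_one₀ (norm_nonneg _) hx)).trans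
        (norm_le_pi_norm c i)
    _ = n * ‖c‖ := by simp

theorem norm_projStarData_le {k : ℕ} {w : ℝ → ℝ} {P : ℝ[X]} {N : ℝ}
    (hP : IsProjStar k (-1) 1 w P) (hw : ∀ y ∈ Icc (-1 : ℝ) 1, |w y| ≤ N) :
    ‖projStarData k P‖ ≤ 2 * N := by
  obtain ⟨-, hmoment, hmean⟩ := hP
  have hN : 0 ≤ N := (abs_nonneg _).trans (hw 0 (by norm_num))
  rw [projStarData_apply, norm_prod_le_iff, pi_norm_le_iff_of_nonneg (by positivity)]
  dsimp only
  refine ⟨fun j => ?_, ?_⟩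
  · have hj := hmoment (X ^ (j : ℕ)) (by rw [degree_X_pow]; exact_mod_cast j.2)
    simp only [eval_pow, eval_X] at hj
    rw [hj]
    calc ‖∫ x in (-1 : ℝ)..1, w x * x ^ (j : ℕ)‖ ≤ N * |1 - (-1)| :=
          intervalIntegral.norm_integral_le_of_norm_le_const fun y hy => ?_
      _ = 2 * N := by norm_num [mul_comm]
    rw [uIoc_of_le (by norm_num)] at hy
    rw [norm_mul, norm_pow, Real.norm_eq_abs, Real.norm_eq_abs]
    exact (mul_le_of_le_one_right (abs_nonneg _)
      (pow_le_one₀ (abs_nonneg y) (abs_le.mpr ⟨hy.1.le, hy.2⟩))).trans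
      (hw y (Ioc_subset_Icc_self hy))
  · rw [hmean, Real.norm_eq_abs, abs_div, abs_two]
    linarith [abs_add_le (w 1) (w (-1)), hw 1 (by norm_num), hw (-1) (by norm_num)]

theorem stmt15 (k : ℕ) (hk : Even k) : ∃ C : ℝ,
    ∀ w : ℝ → ℝ, ContinuousOn w (Set.Icc (-1:ℝ) 1) →
      ∀ P : Polynomial ℝ, IsProjStar k (-1) 1 w P →
        ∀ x ∈ Set.Icc (-1:ℝ) 1,
          |P.eval x| ≤ C * sSup ((fun y => |w y|) '' Set.Icc (-1:ℝ) 1) := by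
  obtain ⟨K, hK0, hK⟩ := exists_norm_degreeLTEquiv_le_projStarData hk
  refine ⟨(k + 1) * K * 2, fun w hw P hP x hx => ?_⟩
  set N := sSup ((fun y => |w y|) '' Icc (-1 : ℝ) 1)
  have hwN : ∀ y ∈ Icc (-1 : ℝ) 1, |w y| ≤ N :=
    fun y hy => le_csSup (isCompact_Icc.bddAbove_image hw.abs) ⟨y, hy, rfl⟩
  have hPmem : P ∈ degreeLT ℝ (k + 1) := by
    rw [degreeLT_succ_eq_degreeLE]; exact mem_degreeLE.mpr hP.1
  calc |P.eval x| ≤ (k + 1) * ‖degreeLTEquiv ℝ (k + 1) ⟨P, hPmem⟩‖ := by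
        simpa using norm_eval_le_of_mem_degreeLT hPmem (abs_le.mpr hx)
    _ ≤ (k + 1) * (K * (2 * N)) := by
        grw [hK P hPmem, norm_projStarData_le hP hwN]
    _ = (k + 1) * K * 2 * N := by ring
end
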